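/- Let π_r ⋖ π_{r−1} ⋖ ⋯ ⋖ π_1 be a chain of set partitions of X under refinement (π_r finest, π_1 = the one-block partition {X}). Then the vectors δ_{π_i} − δ_{π_{i−1}} for i = 2,…,r are pairwise orthogonal and nonzero, and they span the same linear subspace of ℝ^(pairs) as the vectors δ_{π_2},…,δ_{π_r}. -/

import Mathlib

/-!
δ_π is the indicator of the pairs split by π, and refining a partition only enlarges that
set. Along the chain, δ_{π_i} − δ_{π_{i−1}} is therefore the indicator of the pairs split by π_i but
not by π_{i−1}; these sets are disjoint for distinct i, which gives orthogonality. A partition is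
determined by which pairs it splits, so consecutive (distinct) members give a nonzero difference, and
since δ_{π_1} = 0 the differences telescope to δ_{π_2}, …, δ_{π_r}.
-/

open Finset
open scoped Classical

variable {X : Type*} [Fintype X] [DecidableEq X]

/-- i and j (the elements of the pair s) lie in a common block of π. -/
def sameBlockS (π : Finpartition (Finset.univ : Finset X)) (s : Sym2 X) : Prop :=
  ∃ b ∈ π.parts, ∀ x ∈ s, x ∈ b

/-- δ_π : 1 on pairs whose elements lie in different blocks of π, else 0. -/
noncomputable def deltaPart (π : Finpartition (Finset.univ : Finset X)) :
    EuclideanSpace ℝ (Sym2 X) :=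
  WithLp.toLp 2 (fun s : Sym2 X => if sameBlockS π s then (0 : ℝ) else 1)

lemma Fin.antitone_of_succ_le {α : Type*} [Preorder α] {r : ℕ} (f : Fin r → α)
    (hf : ∀ i : Fin r, ∀ h : i.1 + 1 < r, f ⟨i.1 + 1, h⟩ ≤ f i) : Antitone f := by
  cases r with
  | zero => exact fun i => i.elim0
  | succ n => exact Fin.antitone_iff_succ_le.2 fun i => hf i.castSucc (by simp)

lemma Submodule.span_sub_pred_eq_span {R M : Type*} [Ring R] [AddCommGroup M] [Module R M]
    {r : ℕ} (f : Fin r → M) (h0 : ∀ i : Fin r, i.1 = 0 → f i = 0) :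
    span R {x | ∃ i : Fin r, 1 ≤ i.1 ∧ x = f i - f ⟨i.1 - 1, (Nat.sub_le _ _).trans_lt i.2⟩} =
      span R {x | ∃ i : Fin r, 1 ≤ i.1 ∧ x = f i} := by
  set D := span R
    {x | ∃ i : Fin r, 1 ≤ i.1 ∧ x = f i - f ⟨i.1 - 1, (Nat.sub_le _ _).trans_lt i.2⟩}
  set V := span R {x | ∃ i : Fin r, 1 ≤ i.1 ∧ x = f i}
  have mem_V : ∀ i : Fin r, f i ∈ V := fun i => by
    rcases Nat.eq_zero_or_pos i.1 with hi | hi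
    · rw [h0 i hi]; exact V.zero_mem
    · exact subset_span ⟨i, hi, rfl⟩
  have mem_D : ∀ n (h : n < r), f ⟨n, h⟩ ∈ D := by
    intro n
    induction n with
    | zero => intro h; rw [h0 _ rfl]; exact D.zero_mem
    | succ m ih =>
      intro h
      have hdiff : f ⟨m + 1, h⟩ - f ⟨m, by omega⟩ ∈ D := subset_span ⟨⟨m + 1, h⟩, by simp, rfl⟩
      simpa using D.add_mem hdiff (ih (by omega))
  apply le_antisymm <;> rw [span_le]
  · rintro _ ⟨i, -, rfl⟩
    exact V.sub_mem (mem_V i) (mem_V _)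
  · rintro _ ⟨i, -, rfl⟩
    exact mem_D i.1 i.2

lemma sameBlockS.mono {P Q : Finpartition (univ : Finset X)} (hPQ : P ≤ Q) {s : Sym2 X}
    (hs : sameBlockS P s) : sameBlockS Q s := by
  obtain ⟨b, hb, hmem⟩ := hs
  obtain ⟨c, hc, hbc⟩ := hPQ hb
  exact ⟨c, hc, fun x hx => hbc (hmem x hx)⟩

lemma Finpartition.le_of_sameBlockS_imp {P Q : Finpartition (univ : Finset X)}
    (h : ∀ s, sameBlockS P s → sameBlockS Q s) : P ≤ Q := by
  intro b hb
  obtain ⟨x, hx⟩ := P.nonempty_of_mem_parts hb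
  obtain ⟨c, hc, hxc⟩ := Q.exists_mem (mem_univ x)
  refine ⟨c, hc, fun y hy => ?_⟩
  have hPxy : sameBlockS P s(x, y) :=
    ⟨b, hb, fun z hz => by rcases Sym2.mem_iff.1 hz with rfl | rfl <;> assumption⟩
  obtain ⟨c', hc', hxy⟩ := h _ hPxy
  rw [Q.eq_of_mem_parts hc hc' hxc (hxy x (Sym2.mem_mk_left _ _))]
  exact hxy y (Sym2.mem_mk_right _ _)

lemma deltaPart_apply (P : Finpartition (univ : Finset X)) (s : Sym2 X) :
    deltaPart P s = if sameBlockS P s then 0 else 1 := rfl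

lemma deltaPart_injective :
    Function.Injective
      (deltaPart : Finpartition (univ : Finset X) → EuclideanSpace ℝ (Sym2 X)) := by
  intro P Q hPQ
  have hsame : ∀ s, sameBlockS P s ↔ sameBlockS Q s := fun s => by
    have := congrArg (· s) hPQ
    simp only [deltaPart_apply] at this
    split_ifs at this <;> simp_all
  exact le_antisymm (Finpartition.le_of_sameBlockS_imp fun s => (hsame s).1)
    (Finpartition.le_of_sameBlockS_imp fun s => (hsame s).2)

lemma deltaPart_eq_zero_of_parts_eq_singleton_univ {P : Finpartition (univ : Finset X)}
    (hP : P.parts = {univ}) : deltaPart P = 0 := by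
  ext s
  have : sameBlockS P s := ⟨univ, by simp [hP], fun x _ => mem_univ x⟩
  simp [deltaPart_apply, this]

lemma inner_deltaPart_sub_deltaPart_eq_zero {A B C D : Finpartition (univ : Finset X)}
    (hAB : A ≤ B) (hBC : B ≤ C) (hCD : C ≤ D) :
    inner ℝ (deltaPart A - deltaPart B) (deltaPart C - deltaPart D) = 0 := by
  rw [PiLp.inner_apply]
  refine sum_eq_zero fun s _ => ?_
  simp only [PiLp.sub_apply, deltaPart_apply, RCLike.inner_apply, conj_trivial]
  by_cases hC : sameBlockS C s
  · simp [hC, hC.mono hCD]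
  · have hB : ¬ sameBlockS B s := fun h => hC (h.mono hBC)
    have hA : ¬ sameBlockS A s := fun h => hB (h.mono hAB)
    simp [hA, hB]

/-- Index 0 is the one-block partition and larger indices are finer: `π k` is the paper's
π_{k+1}. -/
theorem chain_delta_orthogonal_basis (r : ℕ) (hr : 2 ≤ r)
    (π : Fin r → Finpartition (Finset.univ : Finset X))
    (htop : (π ⟨0, by omega⟩).parts = {Finset.univ})
    (hchain : ∀ i : Fin r, ∀ h : i.1 + 1 < r,
      (∀ b ∈ (π ⟨i.1 + 1, h⟩).parts, ∃ c ∈ (π i).parts, b ⊆ c) ∧ π ⟨i.1 + 1, h⟩ ≠ π i) :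
    (∀ i j : Fin r, 1 ≤ i.1 → 1 ≤ j.1 → i ≠ j →
      (inner ℝ (deltaPart (π i) - deltaPart (π ⟨i.1 - 1, by omega⟩))
             (deltaPart (π j) - deltaPart (π ⟨j.1 - 1, by omega⟩)) : ℝ) = 0) ∧
    (∀ i : Fin r, 1 ≤ i.1 →
      deltaPart (π i) - deltaPart (π ⟨i.1 - 1, by omega⟩) ≠ 0) ∧
    Submodule.span ℝ
        {x : EuclideanSpace ℝ (Sym2 X) | ∃ i : Fin r, 1 ≤ i.1 ∧
          x = deltaPart (π i) - deltaPart (π ⟨i.1 - 1, by omega⟩)} =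
      Submodule.span ℝ
        {x : EuclideanSpace ℝ (Sym2 X) | ∃ i : Fin r, 1 ≤ i.1 ∧ x = deltaPart (π i)} := by
  have hanti : Antitone π := Fin.antitone_of_succ_le π fun i h b hb => (hchain i h).1 b hb
  have hpred_succ : ∀ i : Fin r, 1 ≤ i.1 → (⟨i.1 - 1 + 1, by omega⟩ : Fin r) = i :=
    fun i hi => Fin.ext (by dsimp only; omega)
  have orth : ∀ i j : Fin r, 1 ≤ i.1 → i.1 < j.1 →
      inner ℝ (deltaPart (π j) - deltaPart (π ⟨j.1 - 1, by omega⟩))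
        (deltaPart (π i) - deltaPart (π ⟨i.1 - 1, by omega⟩)) = (0 : ℝ) :=
    fun i j hi hij => inner_deltaPart_sub_deltaPart_eq_zero
      (hanti (Fin.le_def.2 (by dsimp only; omega)))
      (hanti (Fin.le_def.2 (by dsimp only; omega)))
      (hanti (Fin.le_def.2 (by dsimp only; omega)))
  refine ⟨fun i j hi hj hij => ?_, fun i hi => ?_, ?_⟩
  · rcases lt_or_gt_of_ne (Fin.val_ne_of_ne hij) with h | h
    · rw [real_inner_comm]; exact orth i j hi h
    · exact orth j i hj h
  · have hne := (hchain ⟨i.1 - 1, by omega⟩ (by dsimp only; omega)).2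
    rw [hpred_succ i hi] at hne
    exact sub_ne_zero.2 (deltaPart_injective.ne hne)
  · refine Submodule.span_sub_pred_eq_span (deltaPart ∘ π) fun i hi => ?_
    rw [show i = ⟨0, by omega⟩ from Fin.ext hi]
    exact deltaPart_eq_zero_of_parts_eq_singleton_univ htop
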